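/- arXiv:cs/0505025 — 3 statements merged into one kernel-verified Lean document; each statement's English description precedes it below -/
import Mathlib

section
/- Let (S, Act, →) be a transition system and s, t ∈ S such that every state t' reachable from t has only finitely many a-successors for every a ∈ Act (no assumption on s). Then s ~ t if and only if s ~i t for every i ∈ ℕ. -/
/-- A bisimulation on a labelled transition system `tr`. -/
def IsBisim {S Act : Type*} (tr : S → Act → S → Prop) (R : S → S → Prop) : Prop :=
  ∀ s t, R s t →
    (∀ a s', tr s a s' → ∃ t', tr t a t' ∧ R s' t') ∧
    (∀ a t', tr t a t' → ∃ s', tr s a s' ∧ R s' t')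

/-- Bisimilarity: union of all bisimulations. -/
def Bisim {S Act : Type*} (tr : S → Act → S → Prop) (s t : S) : Prop :=
  ∃ R, IsBisim tr R ∧ R s t

/-- A simulation. -/
def IsSim {S Act : Type*} (tr : S → Act → S → Prop) (R : S → S → Prop) : Prop :=
  ∀ s t, R s t → ∀ a s', tr s a s' → ∃ t', tr t a t' ∧ R s' t'

/-- Simulation preorder. -/
def SimPre {S Act : Type*} (tr : S → Act → S → Prop) (s t : S) : Prop :=
  ∃ R, IsSim tr R ∧ R s t

/-- Stratified bisimilarity: `~0` is total, `~(i+1)` is the one-step refinement of `~i`. -/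
def Strat {S Act : Type*} (tr : S → Act → S → Prop) : ℕ → S → S → Prop
  | 0 => fun _ _ => True
  | i + 1 => fun s t =>
      (∀ a s', tr s a s' → ∃ t', tr t a t' ∧ Strat tr i s' t') ∧
      (∀ a t', tr t a t' → ∃ s', tr s a s' ∧ Strat tr i s' t')

/-- Reachability: reflexive-transitive closure of the one-step transitions (labels ignored). -/
def Reach {S Act : Type*} (tr : S → Act → S → Prop) : S → S → Prop :=
  Relation.ReflTransGen (fun x y => ∃ a, tr x a y)
section Aux
variable {S Act : Type*} (tr : S → Act → S → Prop)

lemma strat_mono' {m n : ℕ} (h : m ≤ n) : ∀ {s t : S}, Strat tr n s t → Strat tr m s t := by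
  induction m generalizing n with
  | zero => intro s t _; trivial
  | succ m ih =>
    obtain ⟨k, rfl, hmk⟩ : ∃ k, n = k + 1 ∧ m ≤ k := ⟨n - 1, by omega, by omega⟩
    intro s t hst
    exact ⟨fun a s' h' => (hst.1 a s' h').imp fun t' ⟨ht, hs⟩ => ⟨ht, ih hmk hs⟩,
           fun a t' h' => (hst.2 a t' h').imp fun s' ⟨hs, hst'⟩ => ⟨hs, ih hmk hst'⟩⟩

lemma strat_symm' : ∀ n : ℕ, ∀ {s t : S}, Strat tr n s t → Strat tr n t s := by
  intro n
  induction n with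
  | zero => intro s t _; trivial
  | succ n ih =>
    intro s t h
    exact ⟨fun a t' h' => (h.2 a t' h').imp fun s' ⟨hs, hst⟩ => ⟨hs, ih hst⟩,
           fun a s' h' => (h.1 a s' h').imp fun t' ⟨ht, hst⟩ => ⟨ht, ih hst⟩⟩

lemma strat_trans' : ∀ n : ℕ, ∀ {x y z : S}, Strat tr n x y → Strat tr n y z → Strat tr n x z := by
  intro n
  induction n with
  | zero => intro x y z _ _; trivial
  | succ n ih =>
    intro x y z hxy hyz
    refine ⟨fun a x' hx' => ?_, fun a z' hz' => ?_⟩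
    · obtain ⟨y', hy', h1⟩ := hxy.1 a x' hx'
      obtain ⟨z', hz', h2⟩ := hyz.1 a y' hy'
      exact ⟨z', hz', ih h1 h2⟩
    · obtain ⟨y', hy', h2⟩ := hyz.2 a z' hz'
      obtain ⟨x', hx', h1⟩ := hxy.2 a y' hy'
      exact ⟨x', hx', ih h1 h2⟩

lemma pigeon' {Q : Set S} (hQ : Q.Finite) (f : ℕ → S) (hf : ∀ n, f n ∈ Q) :
    ∃ q ∈ Q, ∀ k : ℕ, ∃ n, k ≤ n ∧ f n = q := by
  haveI := hQ.to_subtype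
  obtain ⟨⟨q, hq⟩, hfib⟩ := Finite.exists_infinite_fiber (fun n => (⟨f n, hf n⟩ : Q))
  have hinf : {n : ℕ | f n = q}.Infinite := by
    rw [← Set.infinite_coe_iff]
    refine Infinite.of_injective (fun x : ((fun n => (⟨f n, hf n⟩ : Q)) ⁻¹' {⟨q, hq⟩}) =>
      (⟨x.1, by
        have h2 := x.2
        simp only [Set.mem_preimage, Set.mem_singleton_iff, Subtype.mk.injEq] at h2
        exact h2⟩ : {n : ℕ | f n = q})) ?_
    intro a b hab
    simpa [Subtype.ext_iff] using hab
  refine ⟨q, hq, fun k => ?_⟩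
  obtain ⟨n, hn, hk⟩ := hinf.exists_gt k
  exact ⟨n, hk.le, hn⟩

lemma exists_all_strat' {Q : Set S} (hQ : Q.Finite) (x : S)
    (h : ∀ n : ℕ, ∃ q ∈ Q, Strat tr n x q) : ∃ q ∈ Q, ∀ n, Strat tr n x q := by
  choose f hfQ hfS using h
  obtain ⟨q, hq, hfreq⟩ := pigeon' hQ f hfQ
  exact ⟨q, hq, fun n => by
      obtain ⟨m, hm, hfm⟩ := hfreq n
      exact hfm ▸ strat_mono' tr hm (hfS m)⟩

lemma bisim_strat' : ∀ n : ℕ, ∀ s t : S, Bisim tr s t → Strat tr n s t := by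
  intro n
  induction n with
  | zero => intro s t _; trivial
  | succ n ih =>
    rintro s t ⟨R, hR, hst⟩
    obtain ⟨h1, h2⟩ := hR s t hst
    exact ⟨fun a s' h' => (h1 a s' h').imp fun t' ⟨ht, hr⟩ => ⟨ht, ih _ _ ⟨R, hR, hr⟩⟩,
           fun a t' h' => (h2 a t' h').imp fun s' ⟨hs, hr⟩ => ⟨hs, ih _ _ ⟨R, hR, hr⟩⟩⟩

end Aux
theorem bisim_iff_strat_of_image_finite {S Act : Type*} (tr : S → Act → S → Prop) (s t : S)
    (hfin : ∀ t', Reach tr t t' → ∀ a : Act, Set.Finite { t'' | tr t' a t'' }) :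
    Bisim tr s t ↔ ∀ i : ℕ, Strat tr i s t := by
  constructor
  · intro h i
    exact bisim_strat' tr i s t h
  · intro hstrat
    refine ⟨fun p q => (∀ i, Strat tr i p q) ∧ Reach tr t q, ?_, hstrat,
      Relation.ReflTransGen.refl⟩
    rintro p q ⟨hpq, hreach⟩
    constructor
    · -- p moves
      intro a p' hp'
      obtain ⟨q'', hq'', hall⟩ := exists_all_strat' tr (hfin q hreach a) p'
        (fun n => (hpq (n + 1)).1 a p' hp')
      exact ⟨q'', hq'', hall, hreach.tail ⟨a, hq''⟩⟩
    · -- q moves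
      intro a q' hq'
      -- step 1: for each n a p-successor matching q' at level n
      have h1 : ∀ n : ℕ, ∃ p', tr p a p' ∧ Strat tr n p' q' :=
        fun n => (hpq (n + 1)).2 a q' hq'
      choose pf hptr hpstrat using h1
      -- step 2: each pf n is ~ω to some q-successor
      have h2 : ∀ n : ℕ, ∃ q'', tr q a q'' ∧ ∀ m, Strat tr m (pf n) q'' := by
        intro n
        obtain ⟨q'', hq'', hall⟩ := exists_all_strat' tr (hfin q hreach a) (pf n)
          (fun m => (hpq (m + 1)).1 a (pf n) (hptr n))
        exact ⟨q'', hq'', hall⟩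
      choose qf hqtr hall using h2
      -- step 3: Strat n (qf n) q'
      have h3 : ∀ n : ℕ, Strat tr n (qf n) q' :=
        fun n => strat_trans' tr n (strat_symm' tr n (hall n n)) (hpstrat n)
      -- step 4: pigeonhole: some q* hit infinitely often
      obtain ⟨qs, hqs, hfreq⟩ := pigeon' (hfin q hreach a) qf hqtr
      have h4 : ∀ m : ℕ, Strat tr m qs q' := by
        intro m
        obtain ⟨n, hmn, hqn⟩ := hfreq m
        exact strat_mono' tr hmn (hqn ▸ h3 n)
      -- step 5: pick witness
      obtain ⟨n₀, -, hqn₀⟩ := hfreq 0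
      refine ⟨pf n₀, hptr n₀, fun m => ?_, hreach.tail ⟨a, hq'⟩⟩
      exact strat_trans' tr m (hqn₀ ▸ hall n₀ m) (h4 m)
end

section
/- For an image-finite transition system T, let T̄ be obtained by keeping only the maximal transitions (s̄ →a t̄ in T̄ iff s →a t is a maximal transition of T). Then s and s̄ are simulation equivalent for every state s: s ⊑ s̄ and s̄ ⊑ s. -/
/-- A transition `s →a t` is maximal if `t` is `⊑`-maximal among the `a`-successors of `s`. -/
def MaxTrans {S Act : Type*} (tr : S → Act → S → Prop) (s : S) (a : Act) (t : S) : Prop :=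
  tr s a t ∧ ∀ t', tr s a t' → SimPre tr t t' → SimPre tr t' t

/-- The disjoint union of `T` (left) and the pruned system `T̄` (right),
which keeps only the maximal transitions of `T`. -/
def CombTr {S Act : Type*} (tr : S → Act → S → Prop) : S ⊕ S → Act → S ⊕ S → Prop :=
  fun x a y =>
    match x, y with
    | Sum.inl x, Sum.inl y => tr x a y
    | Sum.inr x, Sum.inr y => MaxTrans tr x a y
    | _, _ => False


lemma SimPre.refl' {S Act : Type*} (tr : S → Act → S → Prop) (s : S) : SimPre tr s s :=
  ⟨Eq, fun a b hab c d h => hab ▸ ⟨d, h, rfl⟩, rfl⟩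

lemma SimPre.trans' {S Act : Type*} {tr : S → Act → S → Prop} {x y z : S}
    (h1 : SimPre tr x y) (h2 : SimPre tr y z) : SimPre tr x z := by
  obtain ⟨R1, hR1, hxy⟩ := h1
  obtain ⟨R2, hR2, hyz⟩ := h2
  refine ⟨fun p q => ∃ m, R1 p m ∧ R2 m q, ?_, y, hxy, hyz⟩
  rintro p q ⟨m, hpm, hmq⟩ a p' hp'
  obtain ⟨m', hm', hRm⟩ := hR1 p m hpm a p' hp'
  obtain ⟨q', hq', hRq⟩ := hR2 m q hmq a m' hm'
  exact ⟨q', hq', m', hRm, hRq⟩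

lemma exists_maximal_above {S : Type*} (r : S → S → Prop)
    (hrefl : ∀ x, r x x) (htrans : ∀ x y z, r x y → r y z → r x z)
    (s : Set S) (hs : s.Finite) (x : S) (hx : x ∈ s) :
    ∃ m ∈ s, r x m ∧ ∀ y ∈ s, r m y → r y m := by
  classical
  obtain ⟨n, hn⟩ : ∃ n, ({z ∈ s | r x z}).ncard ≤ n := ⟨_, le_refl _⟩
  induction n generalizing x with
  | zero =>
    exfalso
    have hxmem : x ∈ {z ∈ s | r x z} := ⟨hx, hrefl x⟩
    have : ({z ∈ s | r x z}).ncard ≠ 0 := by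
      have := (Set.ncard_pos (hs.subset (Set.sep_subset _ _))).mpr ⟨x, hxmem⟩
      omega
    omega
  | succ n ih =>
    by_cases h : ∀ y ∈ s, r x y → r y x
    · exact ⟨x, hx, hrefl x, h⟩
    · push_neg at h
      obtain ⟨y, hy, hxy, hyx⟩ := h
      have hsub : {z ∈ s | r y z} ⊂ {z ∈ s | r x z} := by
        constructor
        · rintro z ⟨hz, hrz⟩; exact ⟨hz, htrans _ _ _ hxy hrz⟩
        · intro hcon
          exact hyx (hcon ⟨hx, hrefl x⟩).2
      have hlt := Set.ncard_lt_ncard hsub (hs.subset (Set.sep_subset _ _))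
      obtain ⟨m, hm, hym, hmax⟩ := ih y hy (by omega)
      exact ⟨m, hm, htrans _ _ _ hxy hym, hmax⟩

theorem pruned_sim_equivalent {S Act : Type*} (tr : S → Act → S → Prop)
    (hfin : ∀ (s : S) (a : Act), Set.Finite { t | tr s a t }) (s : S) :
    SimPre (CombTr tr) (Sum.inl s) (Sum.inr s) ∧
    SimPre (CombTr tr) (Sum.inr s) (Sum.inl s) := by
  constructor
  · refine ⟨fun p q => ∃ x y, p = Sum.inl x ∧ q = Sum.inr y ∧ SimPre tr x y,
      ?_, s, s, rfl, rfl, SimPre.refl' tr s⟩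
    rintro p q ⟨x, y, rfl, rfl, hsim⟩ a s' hstep
    rcases s' with x' | x'
    case inr => exact absurd hstep (by intro h; exact h)
    have hx' : tr x a x' := hstep
    obtain ⟨R, hR, hRxy⟩ := hsim
    obtain ⟨y', hy', hRy'⟩ := hR x y hRxy a x' hx'
    obtain ⟨m, hm, hym, hmax⟩ := exists_maximal_above (SimPre tr)
      (SimPre.refl' tr) (fun _ _ _ => SimPre.trans') { t | tr y a t } (hfin y a) y' hy'
    refine ⟨Sum.inr m, ⟨hm, fun t' ht' => hmax t' ht'⟩,
      x', m, rfl, rfl, SimPre.trans' ⟨R, hR, hRy'⟩ hym⟩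
  · refine ⟨fun p q => ∃ x, p = Sum.inr x ∧ q = Sum.inl x, ?_, s, rfl, rfl⟩
    rintro p q ⟨x, rfl, rfl⟩ a s' hstep
    rcases s' with x' | x'
    case inl => exact absurd hstep (by intro h; exact h)
    exact ⟨Sum.inl x', hstep.1, x', rfl, rfl⟩
end

section
/- In the pruned system T̄ (keeping only maximal transitions of an image-finite T), simulation equivalence coincides with bisimilarity: the relation R = { (s̄, t̄) : s̄ ⊑ t̄ and t̄ ⊑ s̄ } is a bisimulation on T̄. Hence for all s, t ∈ S: s and t are simulation equivalent in T iff s̄ ~ t̄ in T̄. -/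
section Aux
variable {S Act : Type*} (tr : S → Act → S → Prop)

lemma simPre_refl (s : S) : SimPre tr s s :=
  ⟨Eq, by rintro x y rfl a x' hx'; exact ⟨x', hx', rfl⟩, rfl⟩

lemma isSim_simPre : IsSim tr (SimPre tr) := by
  rintro s t ⟨R, hR, hst⟩ a s' hs'
  obtain ⟨t', ht', h⟩ := hR s t hst a s' hs'
  exact ⟨t', ht', R, hR, h⟩

lemma simPre_trans {s t u : S} (h1 : SimPre tr s t) (h2 : SimPre tr t u) :
    SimPre tr s u := by
  refine ⟨fun x y => ∃ z, SimPre tr x z ∧ SimPre tr z y, ?_, t, h1, h2⟩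
  rintro x y ⟨z, hxz, hzy⟩ a x' hx'
  obtain ⟨z', hz', h1'⟩ := isSim_simPre tr x z hxz a x' hx'
  obtain ⟨y', hy', h2'⟩ := isSim_simPre tr z y hzy a z' hz'
  exact ⟨y', hy', z', h1', h2'⟩

/-- In a finite set with a transitive reflexive relation, above any element there is a
maximal one. -/
lemma exists_max_of_finite {α : Type*} (le : α → α → Prop)
    (hrefl : ∀ x, le x x) (htrans : ∀ {x y z : α}, le x y → le y z → le x z)
    {F : Set α} (hF : F.Finite) {x : α} (hx : x ∈ F) :
    ∃ m ∈ F, le x m ∧ ∀ y ∈ F, le m y → le y m := by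
  classical
  obtain ⟨n, hn⟩ : ∃ n, (hF.toFinset.filter (fun y => le x y ∧ ¬ le y x)).card = n := ⟨_, rfl⟩
  induction n using Nat.strong_induction_on generalizing x with
  | _ n ih =>
    by_cases hmax : ∀ y ∈ F, le x y → le y x
    · exact ⟨x, hx, hrefl x, hmax⟩
    · push_neg at hmax
      obtain ⟨y, hyF, hxy, hnyx⟩ := hmax
      have hss : (hF.toFinset.filter (fun z => le y z ∧ ¬ le z y)) ⊂
          (hF.toFinset.filter (fun z => le x z ∧ ¬ le z x)) := by
        constructor
        · intro z hz
          simp only [Finset.mem_filter, Set.Finite.mem_toFinset] at hz ⊢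
          exact ⟨hz.1, htrans hxy hz.2.1, fun h => hz.2.2 (htrans h hxy)⟩
        · intro hsub
          have hy : y ∈ hF.toFinset.filter (fun z => le x z ∧ ¬ le z x) := by
            simp only [Finset.mem_filter, Set.Finite.mem_toFinset]
            exact ⟨hyF, hxy, hnyx⟩
          have := hsub hy
          simp only [Finset.mem_filter] at this
          exact this.2.2 (hrefl y)
      obtain ⟨m, hmF, hym, hmmax⟩ :=
        ih _ (hn ▸ Finset.card_lt_card hss) hyF rfl
      exact ⟨m, hmF, htrans hxy hym, hmmax⟩

lemma exists_maxTrans (hfin : ∀ (s : S) (a : Act), Set.Finite { t | tr s a t })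
    {s : S} {a : Act} {t : S} (h : tr s a t) :
    ∃ m, MaxTrans tr s a m ∧ SimPre tr t m := by
  obtain ⟨m, hmF, htm, hmax⟩ := exists_max_of_finite (SimPre tr) (simPre_refl tr)
    (fun h1 h2 => simPre_trans tr h1 h2) (hfin s a) h
  exact ⟨m, ⟨hmF, hmax⟩, htm⟩

/-- `⊑` is included in `⊑̄` (pruned simulation preorder). -/
lemma simPre_max_of_simPre (hfin : ∀ (s : S) (a : Act), Set.Finite { t | tr s a t })
    {s t : S} (h : SimPre tr s t) : SimPre (MaxTrans tr) s t := by
  refine ⟨SimPre tr, ?_, h⟩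
  intro x y hxy a x' hx'
  obtain ⟨y', hy', hxy'⟩ := isSim_simPre tr x y hxy a x' hx'.1
  obtain ⟨m, hm, hym⟩ := exists_maxTrans tr hfin hy'
  exact ⟨m, hm, simPre_trans tr hxy' hym⟩

/-- `⊑̄` is included in `⊑`. -/
lemma simPre_of_simPre_max (hfin : ∀ (s : S) (a : Act), Set.Finite { t | tr s a t })
    {s t : S} (h : SimPre (MaxTrans tr) s t) : SimPre tr s t := by
  refine ⟨fun x y => ∃ u, SimPre tr x u ∧ SimPre (MaxTrans tr) u y, ?_, s, simPre_refl tr s, h⟩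
  rintro x y ⟨u, hxu, huy⟩ a x' hx'
  obtain ⟨u', hu', hxu'⟩ := isSim_simPre tr x u hxu a x' hx'
  obtain ⟨m, hm, hum⟩ := exists_maxTrans tr hfin hu'
  obtain ⟨y', hy', hmy'⟩ := isSim_simPre (MaxTrans tr) u y huy a m hm
  exact ⟨y', hy'.1, m, simPre_trans tr hxu' hum, hmy'⟩

end Aux

theorem pruned_simEquiv_eq_bisim {S Act : Type*} (tr : S → Act → S → Prop)
    (hfin : ∀ (s : S) (a : Act), Set.Finite { t | tr s a t }) :
    IsBisim (MaxTrans tr) (fun s t => SimPre (MaxTrans tr) s t ∧ SimPre (MaxTrans tr) t s) ∧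
    ∀ s t : S, (SimPre tr s t ∧ SimPre tr t s) ↔ Bisim (MaxTrans tr) s t := by
  have key : IsBisim (MaxTrans tr)
      (fun s t => SimPre (MaxTrans tr) s t ∧ SimPre (MaxTrans tr) t s) := by
    have step : ∀ s t : S, SimPre (MaxTrans tr) s t → SimPre (MaxTrans tr) t s →
        ∀ a s', MaxTrans tr s a s' →
        ∃ t', MaxTrans tr t a t' ∧
          (SimPre (MaxTrans tr) s' t' ∧ SimPre (MaxTrans tr) t' s') := by
      intro s t hst hts a s' hs'
      obtain ⟨t', ht', hs't'⟩ := isSim_simPre (MaxTrans tr) s t hst a s' hs'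
      obtain ⟨s'', hs'', ht's''⟩ := isSim_simPre (MaxTrans tr) t s hts a t' ht'
      have h1 : SimPre tr s' t' := simPre_of_simPre_max tr hfin hs't'
      have h2 : SimPre tr t' s'' := simPre_of_simPre_max tr hfin ht's''
      have h3 : SimPre tr s'' s' := hs'.2 s'' hs''.1 (simPre_trans tr h1 h2)
      have ht's' : SimPre tr t' s' := simPre_trans tr h2 h3
      exact ⟨t', ht', hs't', simPre_max_of_simPre tr hfin ht's'⟩
    rintro s t ⟨hst, hts⟩
    refine ⟨fun a s' hs' => step s t hst hts a s' hs', fun a t' ht' => ?_⟩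
    obtain ⟨s', hs', h1, h2⟩ := step t s hts hst a t' ht'
    exact ⟨s', hs', h2, h1⟩
  refine ⟨key, fun s t => ⟨?_, ?_⟩⟩
  · rintro ⟨hst, hts⟩
    exact ⟨_, key, simPre_max_of_simPre tr hfin hst, simPre_max_of_simPre tr hfin hts⟩
  · rintro ⟨R, hR, hst⟩
    have h1 : SimPre (MaxTrans tr) s t := ⟨R, fun x y h => (hR x y h).1, hst⟩
    have h2 : SimPre (MaxTrans tr) t s := by
      refine ⟨fun x y => R y x, ?_, hst⟩
      intro x y h a x' hx'
      obtain ⟨y', hy', h'⟩ := (hR y x h).2 a x' hx'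
      exact ⟨y', hy', h'⟩
    exact ⟨simPre_of_simPre_max tr hfin h1, simPre_of_simPre_max tr hfin h2⟩
end
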